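/- arXiv:2603.08876 — 11 statements merged into one kernel-verified Lean document; each statement's English description precedes it below -/
import Mathlib

section
/- For n ≥ 6 and r > 0, the weight of the 1-isolated cut minus the weight of the 2-isolated cut equals r^{N-1} - (r^{N-n} + r^{N-n-1} + ... + r^{N-2n+3}), where N = n(n-1)/2. That is, P^{n,1}(r) = r^{N-1} - Σ_{i=0}^{n-3} r^{N-n-i}. -/
open Finset

/-- Lexicographic index of edge (i,j), i<j, in K_n (1-based). -/
def idx (n i j : ℕ) : ℕ := (i - 1) * n - i * (i - 1) / 2 + (j - i)

/-- Geometric-weight cut value: sum over edges (i,j), 1 ≤ i < j ≤ n, crossing S,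
of r^(N - idx(i,j)) where N = C(n,2). -/
noncomputable def cutW (n : ℕ) (S : Finset ℕ) (r : ℝ) : ℝ :=
  ∑ i ∈ Finset.Icc 1 n, ∑ j ∈ Finset.Icc (i + 1) n,
    if (i ∈ S) ↔ (j ∈ S) then 0 else r ^ (n * (n - 1) / 2 - idx n i j)

/-- P^{n,k}(r) = W^n(C_k;r) - W^n(C_{k+1};r), where C_k = {1,...,k}. -/
noncomputable def P (n k : ℕ) (r : ℝ) : ℝ :=
  cutW n (Finset.Icc 1 k) r - cutW n (Finset.Icc 1 (k + 1)) r

/-!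
Since `C_{k+1} = C_k ∪ {k+1}`, the two cuts differ only in the edges at vertex `k+1`: those to
`C_k` are cut by `C_k` alone, those to vertices above `k+1` by `C_{k+1}` alone. For `k = 1` this
leaves the edge `(1,2)`, of index `1`, against the edges `(2,j)`, `j ≥ 3`, whose indices are the
consecutive numbers `n, …, 2n - 3`.
-/

theorem cutW_Icc_one {n k : ℕ} (hk : k ≤ n) (r : ℝ) :
    cutW n (Icc 1 k) r
      = ∑ i ∈ Icc 1 k, ∑ j ∈ Icc (k + 1) n, r ^ (n * (n - 1) / 2 - idx n i j) := by
  have hIcc_one : ∀ m, Icc 1 m = Ioc 0 m := Icc_add_one_left_eq_Ioc 0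
  unfold cutW
  simp only [hIcc_one, Icc_add_one_left_eq_Ioc]
  rw [← sum_Ioc_consecutive _ (Nat.zero_le k) hk]
  have hright : ∀ i ∈ Ioc k n, ∑ j ∈ Ioc i n,
      (if (i ∈ Ioc 0 k ↔ j ∈ Ioc 0 k) then (0 : ℝ) else r ^ (n * (n - 1) / 2 - idx n i j)) = 0 := by
    intro i hi
    refine sum_eq_zero fun j hj => if_pos ?_
    simp only [mem_Ioc] at hi hj ⊢
    omega
  rw [sum_eq_zero hright, add_zero]
  refine sum_congr rfl fun i hi => ?_
  rw [mem_Ioc] at hi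
  rw [← sum_Ioc_consecutive _ hi.2 hk, sum_eq_zero, zero_add]
  · refine sum_congr rfl fun j hj => if_neg ?_
    simp only [mem_Ioc] at hj ⊢
    omega
  · intro j hj
    refine if_pos ?_
    simp only [mem_Ioc] at hj ⊢
    omega

theorem P_eq_sub {n k : ℕ} (hk : k < n) (r : ℝ) :
    P n k r
      = ∑ i ∈ Icc 1 k, r ^ (n * (n - 1) / 2 - idx n i (k + 1))
        - ∑ j ∈ Icc (k + 2) n, r ^ (n * (n - 1) / 2 - idx n (k + 1) j) := by
  rw [P, cutW_Icc_one hk.le, cutW_Icc_one (k := k + 1) hk,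
    ← insert_Icc_add_one_left_eq_Icc (a := k + 1) hk,
    ← insert_Icc_right_eq_Icc_add_one (by omega : 1 ≤ k + 1)]
  have hright : k + 1 ∉ Icc (k + 1 + 1) n := by simp
  have hleft : k + 1 ∉ Icc 1 k := by simp
  simp only [sum_insert hright, sum_insert hleft, sum_add_distrib]
  ring

theorem sum_edges_from_two (n : ℕ) (r : ℝ) :
    ∑ j ∈ Icc 3 n, r ^ (n * (n - 1) / 2 - idx n 2 j)
      = ∑ i ∈ range (n - 2), r ^ (n * (n - 1) / 2 - n - i) := by
  rw [← Ico_add_one_right_eq_Icc, sum_Ico_eq_sum_range, show n + 1 - 3 = n - 2 by omega]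
  refine sum_congr rfl fun i hi => ?_
  rw [mem_range] at hi
  rw [Nat.sub_sub, idx]
  congr 2
  omega

theorem stmt_1_general (n : ℕ) (hn : 6 ≤ n) (r : ℝ) :
    P n 1 r
      = r ^ (n * (n - 1) / 2 - 1)
        - ∑ i ∈ Finset.range (n - 2), r ^ (n * (n - 1) / 2 - n - i) := by
  rw [P_eq_sub (by omega), Icc_self, sum_singleton, sum_edges_from_two,
    show idx n 1 (1 + 1) = 1 by simp [idx]]

/-- For n ≥ 6 and r > 0, P^{n,1}(r) = r^{N-1} - Σ_{i=0}^{n-3} r^{N-n-i}, N = C(n,2). -/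
theorem stmt_1 (n : ℕ) (hn : 6 ≤ n) (r : ℝ) (hr : 0 < r) :
    P n 1 r
      = r ^ (n * (n - 1) / 2 - 1)
        - ∑ i ∈ Finset.range (n - 2), r ^ (n * (n - 1) / 2 - n - i) :=
  stmt_1_general n hn r
end

section
/- For each n ≥ 6, the polynomial P^{n,1}(r) = r^{N-1} - Σ_{i=0}^{n-3} r^{N-n-i} (with N = C(n,2)) has exactly one root in the open interval (1,2). -/
open Finset

/-- P^{n,1}(r) = r^{N-1} - Σ_{i=0}^{n-3} r^{N-n-i} with N = n(n-1)/2. -/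
noncomputable def Pform (n : ℕ) (r : ℝ) : ℝ :=
  r ^ (n * (n - 1) / 2 - 1)
    - ∑ i ∈ Finset.range (n - 2), r ^ (n * (n - 1) / 2 - n - i)

lemma g_root_iff (m : ℕ) (a : ℝ) (ha : 0 < a) :
    a ^ (2 * m) - ∑ j ∈ range m, a ^ j = 0 ↔
      ∑ j ∈ range m, (a ^ (2 * m - j))⁻¹ = 1 := by
  have hane : a ≠ 0 := ne_of_gt ha
  have hpow : a ^ (2 * m) ≠ 0 := pow_ne_zero _ hane
  have h1 : ∑ j ∈ range m, (a ^ (2 * m - j))⁻¹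
      = (∑ j ∈ range m, a ^ j) / a ^ (2 * m) := by
    rw [Finset.sum_div]
    refine Finset.sum_congr rfl fun j hj => ?_
    rw [mem_range] at hj
    rw [pow_sub₀ a hane (by omega), mul_inv, inv_inv, div_eq_mul_inv, mul_comm]
  rw [h1, div_eq_one_iff_eq hpow, sub_eq_zero, eq_comm]

/-- For each n ≥ 6, P^{n,1} has exactly one root in the open interval (1,2). -/
theorem stmt_4 (n : ℕ) (hn : 6 ≤ n) :
    ∃! r : ℝ, r ∈ Set.Ioo (1 : ℝ) 2 ∧ Pform n r = 0 := by
  obtain ⟨c, hc⟩ : ∃ c, n * (n - 1) = 2 * c := by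
    obtain ⟨c, hc⟩ := Nat.even_mul_succ_self (n - 1)
    refine ⟨c, ?_⟩
    have h : (n - 1) * (n - 1 + 1) = n * (n - 1) := by
      rw [show n - 1 + 1 = n by omega, mul_comm]
    omega
  have h5n : 5 * n ≤ 2 * c := by
    have : n * 5 ≤ n * (n - 1) := Nat.mul_le_mul_left n (by omega)
    omega
  set m : ℕ := n - 2 with hm
  set M : ℕ := c - (2 * n - 3) with hM
  -- factorization
  have hfac : ∀ r : ℝ, Pform n r
      = r ^ M * (r ^ (2 * m) - ∑ j ∈ range m, r ^ j) := by
    intro r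
    unfold Pform
    have e1 : n * (n - 1) / 2 - 1 = M + 2 * m := by omega
    have e2 : ∀ i ∈ range m, r ^ (n * (n - 1) / 2 - n - i)
        = r ^ M * r ^ (m - 1 - i) := by
      intro i hi
      rw [mem_range] at hi
      rw [← pow_add]
      congr 1
      omega
    rw [e1, Finset.sum_congr rfl e2, ← Finset.mul_sum, pow_add,
      Finset.sum_range_reflect (fun j => r ^ j) m]
    ring
  set f : ℝ → ℝ := fun r => r ^ (2 * m) - ∑ j ∈ range m, r ^ j with hf
  have hchar : ∀ r : ℝ, r ∈ Set.Ioo (1 : ℝ) 2 →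
      (Pform n r = 0 ↔ ∑ j ∈ range m, (r ^ (2 * m - j))⁻¹ = 1) := by
    intro r hr
    have hr0 : (0 : ℝ) < r := lt_trans one_pos hr.1
    rw [hfac r, mul_eq_zero]
    have : r ^ M ≠ 0 := pow_ne_zero _ (ne_of_gt hr0)
    constructor
    · rintro (h | h)
      · exact absurd h this
      · exact (g_root_iff m r hr0).mp h
    · intro h
      exact Or.inr ((g_root_iff m r hr0).mpr h)
  -- existence
  have hfc : ContinuousOn f (Set.Icc (1 : ℝ) 2) := by
    apply Continuous.continuousOn
    fun_prop
  have hf1 : f 1 < 0 := by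
    simp only [hf, one_pow, Finset.sum_const, card_range, nsmul_eq_mul, mul_one]
    have : (4 : ℝ) ≤ (m : ℝ) := by
      have : 4 ≤ m := by omega
      exact_mod_cast this
    linarith
  have hf2 : 0 < f 2 := by
    have hgs : ∑ j ∈ range m, (2 : ℝ) ^ j = 2 ^ m - 1 := by
      have := geom_sum_eq (by norm_num : (2 : ℝ) ≠ 1) m
      rw [this]; norm_num
    have h2m : (1 : ℝ) ≤ 2 ^ m := one_le_pow₀ (by norm_num)
    simp only [hf, hgs]
    have : (2 : ℝ) ^ (2 * m) = (2 ^ m) ^ 2 := by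
      rw [← pow_mul, mul_comm]
    nlinarith
  obtain ⟨r, hrmem, hrroot⟩ := intermediate_value_Ioo (by norm_num : (1 : ℝ) ≤ 2) hfc
    (Set.mem_Ioo.mpr ⟨hf1, hf2⟩)
  have hrP : Pform n r = 0 := by
    have h0 : r ^ (2 * m) - ∑ j ∈ range m, r ^ j = 0 := hrroot
    rw [hfac r, h0, mul_zero]
  refine ⟨r, ⟨hrmem, hrP⟩, ?_⟩
  -- uniqueness
  have key : ∀ a b : ℝ, a ∈ Set.Ioo (1 : ℝ) 2 → b ∈ Set.Ioo (1 : ℝ) 2 →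
      Pform n a = 0 → Pform n b = 0 → a < b → False := by
    intro a b ha hb hpa hpb hab
    have ha0 : (0 : ℝ) < a := lt_trans one_pos ha.1
    have hsa := (hchar a ha).mp hpa
    have hsb := (hchar b hb).mp hpb
    have hlt : ∑ j ∈ range m, (b ^ (2 * m - j))⁻¹
        < ∑ j ∈ range m, (a ^ (2 * m - j))⁻¹ := by
      apply Finset.sum_lt_sum_of_nonempty
      · exact Finset.nonempty_range_iff.mpr (by omega)
      · intro j hj
        rw [mem_range] at hj
        have hp : a ^ (2 * m - j) < b ^ (2 * m - j) :=
          pow_lt_pow_left₀ hab (le_of_lt ha0) (by omega)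
        exact inv_strictAnti₀ (pow_pos ha0 _) hp
    rw [hsa, hsb] at hlt
    exact lt_irrefl _ hlt
  intro y hy
  rcases lt_trichotomy y r with h | h | h
  · exact absurd (key y r hy.1 hrmem hy.2 hrP h) (fun hF => hF.elim)
  · exact h
  · exact absurd (key r y hrmem hy.1 hrP hy.2 h) (fun hF => hF.elim)
end

section
/- For n ≥ 7, the unique root r₁(n) of f_n(x) = x^{2n-3} - x^{2n-4} - x^{n-2} + 1 in (1,2) satisfies r₁(n)^{n-1} > 3. -/
/-- f_n(x) = x^{2n-3} - x^{2n-4} - x^{n-2} + 1. -/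
noncomputable def f (n : ℕ) (x : ℝ) : ℝ :=
  x ^ (2 * n - 3) - x ^ (2 * n - 4) - x ^ (n - 2) + 1

/-!
Put `y = r ^ (n - 2)`. The root equation reads `r * y ^ 2 = y ^ 2 + y - 1`, and `r ^ (n - 1) = r * y`.
If `r * y ≤ 3`, the root equation gives `y ^ 2 ≤ 2 * y + 1`. Writing `r = 1 + u`, so that
`u * y ^ 2 = y - 1`, the second-order Bernoulli bound `(1 + u) ^ 5 ≥ 1 + 5 u + 10 u ^ 2` then yields
`y < r ^ 5`, which contradicts `r ^ 5 ≤ r ^ (n - 2) = y` for `n ≥ 7`.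
-/

lemma f_eq_of_two_le {n : ℕ} (hn : 2 ≤ n) (x : ℝ) :
    f n x = x * (x ^ (n - 2)) ^ 2 - (x ^ (n - 2)) ^ 2 - x ^ (n - 2) + 1 := by
  have h3 : 2 * n - 3 = (n - 2) * 2 + 1 := by omega
  have h4 : 2 * n - 4 = (n - 2) * 2 := by omega
  rw [f, h3, h4, pow_succ, pow_mul]
  ring

lemma one_add_five_mul_add_ten_mul_sq_le_one_add_pow_five {u : ℝ} (hu : 0 ≤ u) :
    1 + 5 * u + 10 * u ^ 2 ≤ (1 + u) ^ 5 := by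
  have : (1 + u) ^ 5 - (1 + 5 * u + 10 * u ^ 2) = u ^ 3 * (10 + 5 * u + u ^ 2) := by ring
  nlinarith [show 0 ≤ u ^ 3 * (10 + 5 * u + u ^ 2) by positivity]

lemma pow_four_lt_of_sq_le {y : ℝ} (hy1 : 1 < y) (hy : y ^ 2 ≤ 2 * y + 1) :
    y ^ 4 < 5 * y ^ 2 + 10 * (y - 1) := by
  nlinarith [mul_nonneg (sub_nonneg.mpr hy) (sub_pos.mpr hy1).le]

lemma lt_one_add_pow_five {u y : ℝ} (hu : 0 ≤ u) (hy1 : 1 < y) (hy : y ^ 2 ≤ 2 * y + 1)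
    (hrel : u * y ^ 2 = y - 1) : y < (1 + u) ^ 5 := by
  have hquartic := pow_four_lt_of_sq_le hy1 hy
  have hy4 : 0 < y ^ 4 := by positivity
  have hlin : y - 1 < 5 * u + 10 * u ^ 2 := by
    have : (5 * u + 10 * u ^ 2 - (y - 1)) * y ^ 4
        = (y - 1) * (5 * y ^ 2 + 10 * (y - 1) - y ^ 4) := by
      linear_combination (5 * y ^ 2 + 10 * u * y ^ 2 + 10 * (y - 1)) * hrel
    nlinarith [mul_pos (sub_pos.mpr hy1) (sub_pos.mpr hquartic)]
  linarith [one_add_five_mul_add_ten_mul_sq_le_one_add_pow_five hu]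

/-- For n ≥ 7, the (unique) root r₁(n) of f_n in (1,2) satisfies r₁(n)^{n-1} > 3. -/
theorem stmt_6 (n : ℕ) (hn : 7 ≤ n) (r : ℝ) (hr : r ∈ Set.Ioo (1 : ℝ) 2)
    (hroot : f n r = 0) : 3 < r ^ (n - 1) := by
  set y := r ^ (n - 2) with hy
  have hrel : r * y ^ 2 = y ^ 2 + y - 1 := by
    rw [f_eq_of_two_le (by omega)] at hroot
    linarith
  have hpow : r ^ (n - 1) = r * y := by
    rw [hy, ← pow_succ']
    congr 1
    omega
  rw [hpow]
  by_contra! hle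
  have hy1 : 1 < y := one_lt_pow₀ hr.1 (by omega)
  have hsq : y ^ 2 ≤ 2 * y + 1 := by nlinarith
  have hlt : y < r ^ 5 := by
    simpa using lt_one_add_pow_five (u := r - 1) (by linarith [hr.1]) hy1 hsq (by linarith)
  have hle5 : r ^ 5 ≤ y := pow_le_pow_right₀ hr.1.le (by omega)
  linarith
end

section
/- The sequence r₁(n) of unique roots of f_n(x) = x^{2n-3} - x^{2n-4} - x^{n-2} + 1 in (1,2) is strictly decreasing for n ≥ 7: r₁(n+1) < r₁(n). -/
set_option maxHeartbeats 1000000 in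
/-- The roots r₁(n) of f_n in (1,2) are strictly decreasing for n ≥ 7:
r₁(n+1) < r₁(n). -/
theorem stmt_8 (n : ℕ) (hn : 7 ≤ n) (rn rn1 : ℝ)
    (hrn : rn ∈ Set.Ioo (1 : ℝ) 2) (hrootn : f n rn = 0)
    (hrn1 : rn1 ∈ Set.Ioo (1 : ℝ) 2) (hrootn1 : f (n + 1) rn1 = 0) :
    rn1 < rn := by
  obtain ⟨ha1, ha2⟩ := hrn
  obtain ⟨hb1, hb2⟩ := hrn1
  set m : ℕ := n - 2 with hm
  have hm5 : 5 ≤ m := by omega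
  have e1 : 2 * n - 3 = 2 * m + 1 := by omega
  have e2 : 2 * n - 4 = 2 * m := by omega
  have e3 : n - 2 = m := by omega
  have e4 : 2 * (n + 1) - 3 = 2 * (m + 1) + 1 := by omega
  have e5 : 2 * (n + 1) - 4 = 2 * (m + 1) := by omega
  have e6 : (n + 1) - 2 = m + 1 := by omega
  unfold f at hrootn hrootn1
  rw [e1, e2, e3] at hrootn
  rw [e4, e5, e6] at hrootn1
  set s : ℝ := rn ^ m with hs
  set u : ℝ := rn1 ^ (m + 1) with hu
  have hspos : 0 < s := pow_pos (by linarith) m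
  have hupos : 0 < u := pow_pos (by linarith) (m + 1)
  -- the root equations in terms of s and u
  have E1 : s ^ 2 * (rn - 1) = s - 1 := by
    have p1 : rn ^ (2 * m + 1) = rn ^ (2 * m) * rn := pow_succ rn (2 * m)
    have p2 : rn ^ (2 * m) = s ^ 2 := by rw [hs, ← pow_mul, mul_comm]
    rw [p1, p2] at hrootn
    linarith [hrootn]
  have E2 : u ^ 2 * (rn1 - 1) = u - 1 := by
    have p1 : rn1 ^ (2 * (m + 1) + 1) = rn1 ^ (2 * (m + 1)) * rn1 :=
      pow_succ rn1 (2 * (m + 1))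
    have p2 : rn1 ^ (2 * (m + 1)) = u ^ 2 := by rw [hu, ← pow_mul, mul_comm]
    rw [p1, p2] at hrootn1
    linarith [hrootn1]
  -- Bernoulli gives s ≥ 2
  have hBern : 1 + (m : ℝ) * (rn - 1) ≤ s := by
    have := one_add_mul_le_pow (a := rn - 1) (by linarith) m
    simpa using this
  have hrngt : 0 < rn - 1 := by linarith
  have hsq5 : (5 : ℝ) ≤ s ^ 2 := by
    have hms : (m : ℝ) * (rn - 1) ≤ s ^ 2 * (rn - 1) := by
      rw [E1]; linarith
    have hm' : (m : ℝ) ≤ s ^ 2 := le_of_mul_le_mul_right (by linarith) hrngt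
    have : (5 : ℝ) ≤ (m : ℝ) := by exact_mod_cast hm5
    linarith
  have hs2 : 2 ≤ s := by nlinarith
  -- suppose rn ≤ rn1
  by_contra hcon
  push_neg at hcon
  have hus : s < u := by
    have h1 : rn ^ (m + 1) ≤ rn1 ^ (m + 1) :=
      pow_le_pow_left₀ (by linarith) hcon (m + 1)
    have h2 : s < rn ^ (m + 1) := by
      rw [pow_succ, hs.symm]
      nlinarith
    linarith
  -- φ(t) = (t-1)/t² is strictly decreasing on [2, ∞): contradiction
  have key : u ^ 2 * (s - 1) ≤ s ^ 2 * (u - 1) := by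
    have h1 : s ^ 2 * u ^ 2 * (rn - 1) ≤ s ^ 2 * u ^ 2 * (rn1 - 1) := by
      have hsu : 0 < s ^ 2 * u ^ 2 := by positivity
      nlinarith
    calc u ^ 2 * (s - 1) = s ^ 2 * u ^ 2 * (rn - 1) := by rw [← E1]; ring
      _ ≤ s ^ 2 * u ^ 2 * (rn1 - 1) := h1
      _ = s ^ 2 * (u - 1) := by rw [← E2]; ring
  have hu2 : 2 < u := by linarith
  have hfac : u ^ 2 * (s - 1) - s ^ 2 * (u - 1) = (u - s) * (s * u - s - u) := by
    ring
  have hpos : 0 < (u - s) * (s * u - s - u) := by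
    apply mul_pos (by linarith)
    have h1 : (1 : ℝ) * (u - 1) ≤ (s - 1) * (u - 1) :=
      mul_le_mul_of_nonneg_right (by linarith) (by linarith)
    nlinarith [h1]
  linarith
end

section
/- The unique root r₁(n) of P^{n,1} in (1,2) satisfies 1 < r₁(n) < (n-2)^{1/(n-1)} for n ≥ 6; consequently r₁(n) → 1 as n → ∞. -/
open Finset Filter

/-
At a root r > 1 we have r^(N-1) = Σ_{i<n-2} r^(N-n-i), and every term on the right is at most
r^(N-n), with strict inequality from i = 1 on. Hence r^(N-1) < (n-2) r^(N-n), i.e.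
r^(n-1) < n-2, which is the bound r < (n-2)^(1/(n-1)). Since (n-2)^(1/(n-1)) ≤ (n-1)^(1/(n-1)) → 1,
the roots are squeezed to 1.
-/

lemma sum_range_pow_sub_lt {r : ℝ} (hr : 1 < r) {m a : ℕ} (hm : 2 ≤ m) (ha : 1 ≤ a) :
    ∑ i ∈ range m, r ^ (a - i) < m * r ^ a := by
  have h := Finset.sum_lt_sum (s := range m) (f := fun i => r ^ (a - i)) (g := fun _ => r ^ a)
    (fun i _ => pow_le_pow_right₀ hr.le (Nat.sub_le a i))
    ⟨1, mem_range.2 (by omega), pow_lt_pow_right₀ hr (by omega)⟩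
  simpa only [sum_const, card_range, nsmul_eq_mul] using h

lemma succ_le_mul_pred_div_two {n : ℕ} (hn : 4 ≤ n) : n + 1 ≤ n * (n - 1) / 2 := by
  obtain ⟨k, rfl⟩ : ∃ k, n = k + 4 := ⟨n - 4, by omega⟩
  rw [Nat.le_div_iff_mul_le two_pos, show k + 4 - 1 = k + 3 by omega]
  nlinarith

lemma pow_pred_lt_of_Pform_eq_zero {n : ℕ} (hn : 4 ≤ n) {r : ℝ} (hr : 1 < r)
    (hP : Pform n r = 0) : r ^ (n - 1) < (n : ℝ) - 2 := by
  set N := n * (n - 1) / 2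
  have hN : n + 1 ≤ N := succ_le_mul_pred_div_two hn
  have hroot : r ^ (n - 1) * r ^ (N - n) = ∑ i ∈ range (n - 2), r ^ (N - n - i) := by
    rw [← pow_add, show n - 1 + (N - n) = N - 1 by omega]
    exact sub_eq_zero.1 hP
  have hsum := sum_range_pow_sub_lt hr (m := n - 2) (a := N - n) (by omega) (by omega)
  rw [← hroot, Nat.cast_sub (by omega), Nat.cast_ofNat] at hsum
  exact lt_of_mul_lt_mul_right hsum (pow_nonneg (by positivity) _)

lemma lt_rpow_of_Pform_eq_zero {n : ℕ} (hn : 4 ≤ n) {r : ℝ} (hr : 1 < r)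
    (hP : Pform n r = 0) : r < ((n : ℝ) - 2) ^ ((1 : ℝ) / ((n : ℝ) - 1)) := by
  have hn' : (4 : ℝ) ≤ n := by exact_mod_cast hn
  have hpow := pow_pred_lt_of_Pform_eq_zero hn hr hP
  rw [← Real.rpow_natCast, Nat.cast_pred (by omega)] at hpow
  rw [one_div, Real.lt_rpow_inv_iff_of_pos (by linarith) (by linarith) (by linarith)]
  exact hpow

lemma tendsto_natCast_sub_two_rpow :
    Tendsto (fun n : ℕ => ((n : ℝ) - 2) ^ ((1 : ℝ) / ((n : ℝ) - 1))) atTop (nhds 1) := by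
  have hpred : Tendsto (fun n : ℕ => (n : ℝ) - 1) atTop atTop :=
    tendsto_atTop_add_const_right atTop (-1) tendsto_natCast_atTop_atTop
  refine tendsto_of_tendsto_of_tendsto_of_le_of_le' tendsto_const_nhds
    (tendsto_rpow_div.comp hpred) ?_ ?_
  all_goals
    filter_upwards [eventually_ge_atTop 3] with n hn
    have hn' : (3 : ℝ) ≤ n := by exact_mod_cast hn
  · exact Real.one_le_rpow (by linarith) (div_nonneg zero_le_one (by linarith))
  · exact Real.rpow_le_rpow (by linarith) (by linarith) (div_nonneg zero_le_one (by linarith))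

/-- For n ≥ 6, any root r₁(n) of P^{n,1} in (1,2) satisfies
1 < r₁(n) < (n-2)^{1/(n-1)}; consequently r₁(n) → 1 as n → ∞. -/
theorem stmt_9 :
    (∀ n : ℕ, 6 ≤ n → ∀ r : ℝ, r ∈ Set.Ioo (1 : ℝ) 2 → Pform n r = 0 →
      1 < r ∧ r < ((n : ℝ) - 2) ^ ((1 : ℝ) / ((n : ℝ) - 1))) ∧
    (∀ ρ : ℕ → ℝ,
      (∀ n : ℕ, 6 ≤ n → ρ n ∈ Set.Ioo (1 : ℝ) 2 ∧ Pform n (ρ n) = 0) →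
      Tendsto ρ atTop (nhds 1)) := by
  refine ⟨fun n hn r hr hP => ⟨hr.1, lt_rpow_of_Pform_eq_zero (by omega) hr.1 hP⟩,
    fun ρ hρ => ?_⟩
  refine tendsto_of_tendsto_of_tendsto_of_le_of_le' tendsto_const_nhds
    tendsto_natCast_sub_two_rpow ?_ ?_
  all_goals
    filter_upwards [eventually_ge_atTop 6] with n hn
    obtain ⟨hr, hP⟩ := hρ n hn
  · exact hr.1.le
  · exact (lt_rpow_of_Pform_eq_zero (by omega) hr.1 hP).le
end

section
/- For all k ≥ 2 and n ≥ k+1 and all r, P^{n,k}(r) = r^{N-k} + P^{n-1,k-1}(r), where N = C(n,2). -/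
open Finset

lemma exp_shift (n i j : ℕ) (h2 : 2 ≤ i) (hij : i < j) (hjn : j ≤ n) :
    n * (n - 1) / 2 - idx n i j = (n - 1) * (n - 1 - 1) / 2 - idx (n - 1) (i - 1) (j - 1) := by
  obtain ⟨c, rfl⟩ : ∃ c, i = c + 2 := ⟨i - 2, by omega⟩
  obtain ⟨m, rfl⟩ : ∃ m, n = m + 3 := ⟨n - 3, by omega⟩
  unfold idx
  simp only [show c + 2 - 1 = c + 1 from rfl, show c + 1 - 1 = c from rfl,
    show m + 3 - 1 = m + 2 from rfl, show m + 2 - 1 = m + 1 from rfl]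
  have key : ∀ P1 P2 P3 P4 P5 P6 : ℕ, P1 = P4 + 2 * (m + 2) → P2 = P6 + 2 * (c + 1) →
      P3 = P5 + (m + 2) + (c + 1) → P6 ≤ P5 → c + 3 ≤ j → j ≤ m + 3 →
      P1 / 2 - (P3 - P2 / 2 + (j - (c + 2))) = P4 / 2 - (P5 - P6 / 2 + (j - 1 - (c + 1))) := by
    intros; omega
  refine key ((m+3)*(m+2)) ((c+2)*((c+2)-1)) ((c+1)*(m+3)) ((m+2)*(m+1)) (c*(m+2)) ((c+1)*c)
    (by ring) (by norm_num; ring) (by ring) ?_ (by omega) hjn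
  calc (c+1)*c = c*(c+1) := by ring
    _ ≤ c*(m+2) := Nat.mul_le_mul_left c (by omega)

lemma cutW_eq (n k : ℕ) (hk : k ≤ n) (r : ℝ) :
    cutW n (Finset.Icc 1 k) r
      = ∑ i ∈ Finset.Ioc 0 k, ∑ j ∈ Finset.Ioc k n, r ^ (n * (n - 1) / 2 - idx n i j) := by
  unfold cutW
  have hIcc : ∀ a b : ℕ, Finset.Icc (a + 1) b = Finset.Ioc a b := by
    intro a b; ext x; simp only [Finset.mem_Icc, Finset.mem_Ioc]; omega
  rw [show (Finset.Icc 1 n) = Finset.Ioc 0 n from hIcc 0 n]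
  rw [← Finset.sum_Ioc_consecutive _ (Nat.zero_le k) hk]
  have h2 : ∑ i ∈ Finset.Ioc k n, ∑ j ∈ Finset.Icc (i + 1) n,
      (if (i ∈ Finset.Icc 1 k) ↔ (j ∈ Finset.Icc 1 k) then (0:ℝ)
        else r ^ (n * (n - 1) / 2 - idx n i j)) = 0 := by
    apply Finset.sum_eq_zero
    intro i hi
    apply Finset.sum_eq_zero
    intro j hj
    simp only [Finset.mem_Ioc, Finset.mem_Icc] at *
    rw [if_pos]
    constructor <;> intro <;> omega
  rw [h2, add_zero]
  apply Finset.sum_congr rfl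
  intro i hi
  simp only [Finset.mem_Ioc] at hi
  rw [hIcc i n, ← Finset.sum_Ioc_consecutive _ hi.2 hk]
  have e1 : ∑ j ∈ Finset.Ioc i k,
      (if (i ∈ Finset.Icc 1 k) ↔ (j ∈ Finset.Icc 1 k) then (0:ℝ)
        else r ^ (n * (n - 1) / 2 - idx n i j)) = 0 := by
    apply Finset.sum_eq_zero
    intro j hj
    simp only [Finset.mem_Ioc, Finset.mem_Icc] at *
    rw [if_pos]
    constructor <;> intro <;> omega
  rw [e1, zero_add]
  apply Finset.sum_congr rfl
  intro j hj
  simp only [Finset.mem_Ioc, Finset.mem_Icc] at *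
  rw [if_neg]
  intro h
  omega

lemma P_eq (n k : ℕ) (hk : 1 ≤ k) (hn : k + 1 ≤ n) (r : ℝ) :
    P n k r = (∑ i ∈ Finset.Ioc 0 k, r ^ (n * (n - 1) / 2 - idx n i (k + 1)))
            - ∑ j ∈ Finset.Ioc (k + 1) n, r ^ (n * (n - 1) / 2 - idx n (k + 1) j) := by
  unfold P
  rw [cutW_eq n k (by omega) r, cutW_eq n (k + 1) hn r]
  have A : ∀ i : ℕ, (∑ j ∈ Finset.Ioc k n, r ^ (n * (n - 1) / 2 - idx n i j))
      = r ^ (n * (n - 1) / 2 - idx n i (k + 1))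
        + ∑ j ∈ Finset.Ioc (k + 1) n, r ^ (n * (n - 1) / 2 - idx n i j) := by
    intro i
    rw [← Finset.sum_Ioc_consecutive _ (Nat.le_succ k) hn, Nat.Ioc_succ_singleton,
      Finset.sum_singleton]
  have B : (∑ i ∈ Finset.Ioc 0 (k + 1), ∑ j ∈ Finset.Ioc (k + 1) n,
        r ^ (n * (n - 1) / 2 - idx n i j))
      = (∑ i ∈ Finset.Ioc 0 k, ∑ j ∈ Finset.Ioc (k + 1) n, r ^ (n * (n - 1) / 2 - idx n i j))
        + ∑ j ∈ Finset.Ioc (k + 1) n, r ^ (n * (n - 1) / 2 - idx n (k + 1) j) := by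
    rw [← Finset.sum_Ioc_consecutive _ (Nat.zero_le k) (Nat.le_succ k), Nat.Ioc_succ_singleton,
      Finset.sum_singleton]
  simp only [A, Finset.sum_add_distrib, B]
  ring

/-- Recursive formula: for k ≥ 2 and n ≥ k+1,
P^{n,k}(r) = r^{N-k} + P^{n-1,k-1}(r), N = C(n,2). -/
theorem stmt_11 (n k : ℕ) (hk : 2 ≤ k) (hn : k + 1 ≤ n) (r : ℝ) :
    P n k r = r ^ (n * (n - 1) / 2 - k) + P (n - 1) (k - 1) r := by
  rw [P_eq n k (by omega) hn r, P_eq (n - 1) (k - 1) (by omega) (by omega) r]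
  rw [show k - 1 + 1 = k from by omega]
  rw [← Finset.sum_Ioc_consecutive (fun i => r ^ (n * (n - 1) / 2 - idx n i (k + 1)))
    (by omega : (0:ℕ) ≤ 1) (by omega : 1 ≤ k)]
  rw [show Finset.Ioc (0:ℕ) 1 = {1} from rfl, Finset.sum_singleton]
  have h1 : idx n 1 (k + 1) = k := by
    unfold idx; norm_num
  rw [h1]
  have hs1 : (∑ i ∈ Finset.Ioc 1 k, r ^ (n * (n - 1) / 2 - idx n i (k + 1)))
      = ∑ i ∈ Finset.Ioc 0 (k - 1), r ^ ((n - 1) * (n - 1 - 1) / 2 - idx (n - 1) i k) := by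
    rw [show Finset.Ioc (1:ℕ) k = Finset.map (addRightEmbedding 1) (Finset.Ioc 0 (k - 1)) from by
      rw [Finset.map_add_right_Ioc]; congr 1; omega]
    rw [Finset.sum_map]
    apply Finset.sum_congr rfl
    intro i hi
    simp only [Finset.mem_Ioc, addRightEmbedding_apply] at *
    rw [show n * (n - 1) / 2 - idx n (i + 1) (k + 1)
        = (n - 1) * (n - 1 - 1) / 2 - idx (n - 1) (i + 1 - 1) (k + 1 - 1) from
      exp_shift n (i + 1) (k + 1) (by omega) (by omega) (by omega)]
    congr 2 <;> omega
  have hs2 : (∑ j ∈ Finset.Ioc (k + 1) n, r ^ (n * (n - 1) / 2 - idx n (k + 1) j))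
      = ∑ j ∈ Finset.Ioc k (n - 1), r ^ ((n - 1) * (n - 1 - 1) / 2 - idx (n - 1) k j) := by
    rw [show Finset.Ioc (k + 1) n = Finset.map (addRightEmbedding 1) (Finset.Ioc k (n - 1)) from by
      rw [Finset.map_add_right_Ioc]; congr 1; omega]
    rw [Finset.sum_map]
    apply Finset.sum_congr rfl
    intro j hj
    simp only [Finset.mem_Ioc, addRightEmbedding_apply] at *
    rw [show n * (n - 1) / 2 - idx n (k + 1) (j + 1)
        = (n - 1) * (n - 1 - 1) / 2 - idx (n - 1) (k + 1 - 1) (j + 1 - 1) from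
      exp_shift n (k + 1) (j + 1) (by omega) (by omega) (by omega)]
    congr 2 <;> omega
  rw [hs1, hs2]
  ring
end

section
/- For 1 ≤ k ≤ ⌊n/2⌋ - 1, in the polynomial P^{n,k}(r), all monomials with positive coefficient have strictly larger exponent than all monomials with negative coefficient; specifically, the smallest positive-coefficient exponent a_k and largest negative-coefficient exponent b_1 satisfy a_k - b_1 = n - k. -/
open Finset

lemma two_idx (n i j : ℕ) (h1 : 1 ≤ i) (hin : i ≤ n) (hij : i ≤ j) :
    2 * (idx n i j : ℤ) = ((i:ℤ) - 1) * (2 * n - i) + 2 * ((j:ℤ) - i) := by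
  have ht : 2 * (i * (i - 1) / 2) = i * (i - 1) := by
    rcases Nat.even_or_odd i with ⟨m, hm⟩ | ⟨m, hm⟩ <;> subst hm <;>
      simp [Nat.mul_sub_one] <;> ring_nf <;> omega
  have hle : i * (i - 1) / 2 ≤ (i - 1) * n := by
    have : i * (i - 1) ≤ 2 * ((i - 1) * n) := by
      calc i * (i - 1) = (i-1) * i := by ring
        _ ≤ (i-1) * (2*n) := Nat.mul_le_mul_left _ (by omega)
        _ = 2 * ((i-1)*n) := by ring
    omega
  unfold idx
  push_cast [hle, hij, h1]
  have hd : ((i:ℤ) * ((i:ℤ) - 1)) / 2 * 2 = (i:ℤ) * ((i:ℤ) - 1) := by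
    apply Int.ediv_mul_cancel
    have := congrArg (Nat.cast : ℕ → ℤ) ht
    push_cast [h1] at this
    exact ⟨_, this.symm⟩
  linarith

/-- Exponent separation in P^{n,k}: every positive-coefficient exponent
(from edges (i,k+1), i ≤ k) strictly exceeds every negative-coefficient exponent
(from edges (k+1,j), j ≥ k+2); and the smallest positive exponent
a_k = N - 1 - (k-1)(2n-k)/2 and largest negative exponent
b_1 = N - 1 - k(2n-k-1)/2 satisfy a_k - b_1 = n - k. -/
theorem stmt_12 (n k : ℕ) (hk : 1 ≤ k) (hkn : k ≤ n / 2 - 1) :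
    (∀ i : ℕ, 1 ≤ i → i ≤ k → ∀ j : ℕ, k + 2 ≤ j → j ≤ n →
        n * (n - 1) / 2 - idx n (k + 1) j < n * (n - 1) / 2 - idx n i (k + 1)) ∧
    (((n * (n - 1) / 2 : ℤ) - 1 - ((k : ℤ) - 1) * (2 * n - k) / 2)
        - ((n * (n - 1) / 2 : ℤ) - 1 - (k : ℤ) * (2 * n - k - 1) / 2)
      = (n : ℤ) - k) := by
  have hn : 2 * k + 2 ≤ n := by omega
  constructor
  · intro i hi hik j hj hjn
    have ha := two_idx n i (k+1) hi (by omega) (by omega)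
    have hb := two_idx n (k+1) j (by omega) (by omega) (by omega)
    have hab : idx n i (k+1) < idx n (k+1) j := by
      have : 2 * (idx n i (k+1) : ℤ) < 2 * (idx n (k+1) j : ℤ) := by
        rw [ha, hb]
        push_cast
        nlinarith [mul_nonneg (by push_cast; omega : (0:ℤ) ≤ (k:ℤ) - i + 1)
          (by push_cast; omega : (0:ℤ) ≤ 2*(n:ℤ) - k - i - 2)]
      exact_mod_cast by linarith
    have hbN : idx n (k+1) j ≤ n * (n-1) / 2 := by
      have hN : 2 * (n * (n-1) / 2) = n * (n-1) := by
        rcases Nat.even_or_odd n with ⟨m, hm⟩ | ⟨m, hm⟩ <;> subst hm <;>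
          simp [Nat.mul_sub_one] <;> ring_nf <;> omega
      have : 2 * (idx n (k+1) j : ℤ) ≤ (n:ℤ) * (n - 1) := by
        rw [hb]
        push_cast
        nlinarith [mul_nonneg (by push_cast; omega : (0:ℤ) ≤ (n:ℤ) - k - 1)
          (by push_cast; omega : (0:ℤ) ≤ (n:ℤ) - k - 2)]
      have h2 : 2 * idx n (k+1) j ≤ n * (n-1) := by
        have hcast : ((n * (n-1) : ℕ) : ℤ) = (n:ℤ) * ((n:ℤ) - 1) := by
          rw [Nat.cast_mul, Nat.cast_sub (by omega : 1 ≤ n)]; push_cast; ring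
        omega
      omega
    omega
  · rcases Int.even_or_odd (k:ℤ) with ⟨m, hm⟩ | ⟨m, hm⟩
    · have h1 : ((k:ℤ) - 1) * (2 * n - k) = 2 * ((2*m - 1) * ((n:ℤ) - m)) := by
        rw [hm]; ring
      have h2 : (k:ℤ) * (2 * n - k - 1) = 2 * (m * (2*(n:ℤ) - 2*m - 1)) := by
        rw [hm]; ring
      rw [h1, h2, Int.mul_ediv_cancel_left _ two_ne_zero,
        Int.mul_ediv_cancel_left _ two_ne_zero, hm]
      ring
    · have h1 : ((k:ℤ) - 1) * (2 * n - k) = 2 * (m * (2*(n:ℤ) - 2*m - 1)) := by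
        rw [hm]; ring
      have h2 : (k:ℤ) * (2 * n - k - 1) = 2 * ((2*m + 1) * ((n:ℤ) - m - 1)) := by
        rw [hm]; ring
      rw [h1, h2, Int.mul_ediv_cancel_left _ two_ne_zero,
        Int.mul_ediv_cancel_left _ two_ne_zero, hm]
      ring
end

section
/- For n ≥ 6 and 1 ≤ k ≤ ⌊n/2⌋ - 1, P^{n,k}(r) admits the expansion P^{n,k}(r) = Σ_{j=0}^{k-1} r^{C(n-j,2) - (k-j)} - Σ_{i=0}^{m-3} r^{C(m,2) - m - i}, where m = n - k + 1. -/
open Finset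

lemma even_mul_pred (m : ℕ) : 2 ∣ m * (m - 1) := by
  cases m with
  | zero => simp
  | succ m => simpa [Nat.mul_comm] using (Nat.even_mul_succ_self m).two_dvd

/-- Exponent identity for the positive part. -/
lemma exp1 (n k a : ℕ) (ha : a + 1 ≤ k) (hkn : k + 1 ≤ n) :
    n * (n - 1) / 2 - idx n (a + 1) (k + 1)
      = (n - a) * (n - a - 1) / 2 - (k - a) := by
  unfold idx
  simp only [Nat.add_sub_cancel, Nat.succ_sub_succ, Nat.sub_zero]
  have h1 : a ≤ n := by omega
  have h2 : (1 : ℕ) ≤ n - a := by omega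
  have key : n * (n - 1) + (a + 1) * a = 2 * (a * n) + (n - a) * (n - a - 1) := by
    zify [h1, h2, show 1 ≤ n by omega]
    ring
  have h3 : (a + 1) * a ≤ 2 * (a * n) := by
    calc (a + 1) * a ≤ n * a := Nat.mul_le_mul_right a (by omega)
      _ = a * n := Nat.mul_comm n a
      _ ≤ 2 * (a * n) := by omega
  have hA : 2 ∣ n * (n - 1) := even_mul_pred n
  have hB : 2 ∣ (a + 1) * a := by simpa using even_mul_pred (a + 1)
  have hC : 2 ∣ (n - a) * (n - a - 1) := even_mul_pred (n - a)
  generalize n * (n - 1) = q at key hA ⊢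
  generalize a * n = p at key h3 ⊢
  generalize (a + 1) * a = s at key h3 hB ⊢
  generalize (n - a) * (n - a - 1) = c at key hC ⊢
  omega

/-- Exponent identity for the negative part. -/
lemma exp2 (n k j : ℕ) (h1 : k + 2 ≤ j) (h2 : j ≤ n) :
    n * (n - 1) / 2 - idx n (k + 1) j
      = (n - k + 1) * (n - k) / 2 - (n - k + 1) - (j - (k + 2)) := by
  unfold idx
  simp only [Nat.add_sub_cancel]
  have hkn : k ≤ n := by omega
  have key : (n - k + 1) * (n - k) + 2 * (k * n) + 2 * k
      = n * (n - 1) + (k + 1) * k + 2 * n := by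
    zify [hkn, show 1 ≤ n by omega]
    ring
  have h3 : (k + 1) * k ≤ 2 * (k * n) := by
    calc (k + 1) * k ≤ n * k := Nat.mul_le_mul_right k (by omega)
      _ = k * n := Nat.mul_comm n k
      _ ≤ 2 * (k * n) := by omega
  have hA : 2 ∣ n * (n - 1) := even_mul_pred n
  have hB : 2 ∣ (k + 1) * k := by simpa using even_mul_pred (k + 1)
  have hC : 2 ∣ (n - k + 1) * (n - k) := by
    simpa using even_mul_pred (n - k + 1)
  generalize n * (n - 1) = q at key hA ⊢
  generalize k * n = p at key h3 ⊢
  generalize (k + 1) * k = s at key h3 hB ⊢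
  generalize (n - k + 1) * (n - k) = c at key hC ⊢
  omega

/-- Explicit expansion: for n ≥ 6 and 1 ≤ k ≤ ⌊n/2⌋ - 1,
P^{n,k}(r) = Σ_{j=0}^{k-1} r^{C(n-j,2)-(k-j)} - Σ_{i=0}^{m-3} r^{C(m,2)-m-i},
where m = n - k + 1. -/
theorem stmt_13 (n k : ℕ) (hn : 6 ≤ n) (hk : 1 ≤ k) (hkn : k ≤ n / 2 - 1)
    (r : ℝ) :
    P n k r
      = (∑ j ∈ Finset.range k, r ^ ((n - j) * (n - j - 1) / 2 - (k - j)))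
        - ∑ i ∈ Finset.range (n - k + 1 - 2),
            r ^ ((n - k + 1) * (n - k) / 2 - (n - k + 1) - i) := by
  have h2k : 2 * k + 2 ≤ n := by omega
  unfold P cutW
  simp only [← Finset.sum_sub_distrib]
  have hsplit : (∑ i ∈ Icc 1 n, ∑ j ∈ Icc (i + 1) n,
        ((if ((i ∈ Icc 1 k) ↔ (j ∈ Icc 1 k)) then (0:ℝ)
            else r ^ (n * (n - 1) / 2 - idx n i j))
          - (if ((i ∈ Icc 1 (k+1)) ↔ (j ∈ Icc 1 (k+1))) then (0:ℝ)
            else r ^ (n * (n - 1) / 2 - idx n i j))))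
      = (∑ i ∈ Icc 1 k, ∑ j ∈ Icc (i + 1) n,
        ((if ((i ∈ Icc 1 k) ↔ (j ∈ Icc 1 k)) then (0:ℝ)
            else r ^ (n * (n - 1) / 2 - idx n i j))
          - (if ((i ∈ Icc 1 (k+1)) ↔ (j ∈ Icc 1 (k+1))) then (0:ℝ)
            else r ^ (n * (n - 1) / 2 - idx n i j))))
        + ∑ i ∈ Icc (k+1) n, ∑ j ∈ Icc (i + 1) n,
        ((if ((i ∈ Icc 1 k) ↔ (j ∈ Icc 1 k)) then (0:ℝ)
            else r ^ (n * (n - 1) / 2 - idx n i j))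
          - (if ((i ∈ Icc 1 (k+1)) ↔ (j ∈ Icc 1 (k+1))) then (0:ℝ)
            else r ^ (n * (n - 1) / 2 - idx n i j))) := by
    have h := Finset.sum_Ioc_consecutive
      (fun i => ∑ j ∈ Icc (i + 1) n,
        ((if ((i ∈ Icc 1 k) ↔ (j ∈ Icc 1 k)) then (0:ℝ)
            else r ^ (n * (n - 1) / 2 - idx n i j))
          - (if ((i ∈ Icc 1 (k+1)) ↔ (j ∈ Icc 1 (k+1))) then (0:ℝ)
            else r ^ (n * (n - 1) / 2 - idx n i j))))
      (show 0 ≤ k by omega) (show k ≤ n by omega)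
    simp only [← Finset.Icc_add_one_left_eq_Ioc] at h
    exact h.symm
  rw [hsplit]
  -- Part 1: i ∈ Icc 1 k
  have part1 : ∀ i ∈ Icc 1 k,
      (∑ j ∈ Icc (i + 1) n,
        ((if ((i ∈ Icc 1 k) ↔ (j ∈ Icc 1 k)) then (0:ℝ)
            else r ^ (n * (n - 1) / 2 - idx n i j))
          - (if ((i ∈ Icc 1 (k+1)) ↔ (j ∈ Icc 1 (k+1))) then (0:ℝ)
            else r ^ (n * (n - 1) / 2 - idx n i j))))
      = r ^ (n * (n - 1) / 2 - idx n i (k + 1)) := by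
    intro i hi
    simp only [Finset.mem_Icc] at hi
    have step : ∀ j ∈ Icc (i + 1) n,
        ((if ((i ∈ Icc 1 k) ↔ (j ∈ Icc 1 k)) then (0:ℝ)
            else r ^ (n * (n - 1) / 2 - idx n i j))
          - (if ((i ∈ Icc 1 (k+1)) ↔ (j ∈ Icc 1 (k+1))) then (0:ℝ)
            else r ^ (n * (n - 1) / 2 - idx n i j)))
        = if j = k + 1 then r ^ (n * (n - 1) / 2 - idx n i j) else 0 := by
      intro j hj
      simp only [Finset.mem_Icc] at hj
      by_cases hj1 : j = k + 1
      · rw [if_pos hj1]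
        rw [if_neg (by simp only [Finset.mem_Icc]; omega),
            if_pos (by simp only [Finset.mem_Icc]; omega)]
        ring
      · rw [if_neg hj1]
        by_cases hj2 : j ≤ k
        · rw [if_pos (by simp only [Finset.mem_Icc]; omega),
              if_pos (by simp only [Finset.mem_Icc]; omega)]
          ring
        · rw [if_neg (by simp only [Finset.mem_Icc]; omega),
              if_neg (by simp only [Finset.mem_Icc]; omega)]
          ring
    rw [Finset.sum_congr rfl step, Finset.sum_ite_eq' (Icc (i+1) n) (k+1)
      (fun j => r ^ (n * (n - 1) / 2 - idx n i j))]
    rw [if_pos (by simp only [Finset.mem_Icc]; omega)]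
  rw [Finset.sum_congr rfl part1]
  -- Part 2: i ∈ Icc (k+1) n
  have part2 : ∀ i ∈ Icc (k + 1) n,
      (∑ j ∈ Icc (i + 1) n,
        ((if ((i ∈ Icc 1 k) ↔ (j ∈ Icc 1 k)) then (0:ℝ)
            else r ^ (n * (n - 1) / 2 - idx n i j))
          - (if ((i ∈ Icc 1 (k+1)) ↔ (j ∈ Icc 1 (k+1))) then (0:ℝ)
            else r ^ (n * (n - 1) / 2 - idx n i j))))
      = if i = k + 1 then
          -(∑ j ∈ Icc (k + 2) n, r ^ (n * (n - 1) / 2 - idx n (k+1) j)) else 0 := by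
    intro i hi
    simp only [Finset.mem_Icc] at hi
    by_cases hik : i = k + 1
    · subst hik
      rw [if_pos rfl, ← Finset.sum_neg_distrib]
      apply Finset.sum_congr rfl
      intro j hj
      simp only [Finset.mem_Icc] at hj
      rw [if_pos (by simp only [Finset.mem_Icc]; omega),
          if_neg (by simp only [Finset.mem_Icc]; omega)]
      ring
    · rw [if_neg hik]
      apply Finset.sum_eq_zero
      intro j hj
      simp only [Finset.mem_Icc] at hj
      rw [if_pos (by simp only [Finset.mem_Icc]; omega),
          if_pos (by simp only [Finset.mem_Icc]; omega)]
      ring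
  rw [Finset.sum_congr rfl part2,
      Finset.sum_ite_eq' (Icc (k+1) n) (k+1)
        (fun _ => -(∑ j ∈ Icc (k + 2) n, r ^ (n * (n - 1) / 2 - idx n (k+1) j))),
      if_pos (by simp only [Finset.mem_Icc]; omega)]
  -- Now rewrite both sums into the target form
  have hS1 : (∑ i ∈ Icc 1 k, r ^ (n * (n - 1) / 2 - idx n i (k + 1)))
      = ∑ j ∈ Finset.range k, r ^ ((n - j) * (n - j - 1) / 2 - (k - j)) := by
    rw [show Icc 1 k = Ico 1 (k + 1) from rfl, Finset.sum_Ico_eq_sum_range]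
    simp only [Nat.add_sub_cancel]
    apply Finset.sum_congr rfl
    intro a ha
    simp only [Finset.mem_range] at ha
    rw [show 1 + a = a + 1 from Nat.add_comm 1 a,
        exp1 n k a (by omega) (by omega)]
  have hS2 : (∑ j ∈ Icc (k + 2) n, r ^ (n * (n - 1) / 2 - idx n (k+1) j))
      = ∑ i ∈ Finset.range (n - k + 1 - 2),
          r ^ ((n - k + 1) * (n - k) / 2 - (n - k + 1) - i) := by
    rw [show Icc (k + 2) n = Ico (k + 2) (n + 1) from rfl,
        Finset.sum_Ico_eq_sum_range,
        show n + 1 - (k + 2) = n - k + 1 - 2 from by omega]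
    apply Finset.sum_congr rfl
    intro a ha
    simp only [Finset.mem_range] at ha
    rw [exp2 n k (k + 2 + a) (by omega) (by omega),
        show k + 2 + a - (k + 2) = a from by omega]
  rw [hS1, hS2]
  ring
end

section
/- For each n ≥ 6 and 1 ≤ k ≤ ⌊n/2⌋ - 1, the polynomial P^{n,k}(r) has exactly one root in (0,∞), and this root lies in (1,2). -/
open Finset

/-- P^{n,k}(r) = Σ_{j=0}^{k-1} r^{C(n-j,2)-(k-j)} - Σ_{i=0}^{m-3} r^{C(m,2)-m-i},
m = n - k + 1. -/
noncomputable def Pexp (n k : ℕ) (r : ℝ) : ℝ :=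
  (∑ j ∈ Finset.range k, r ^ ((n - j) * (n - j - 1) / 2 - (k - j)))
    - ∑ i ∈ Finset.range (n - k + 1 - 2),
        r ^ ((n - k + 1) * (n - k) / 2 - (n - k + 1) - i)

lemma aux_quad (m d : ℕ) (hm : 1 ≤ m) :
    m * (m - 1) / 2 + d ≤ (m + d) * (m + d - 1) / 2 := by
  induction d with
  | zero => simp
  | succ d ih =>
    have h := Nat.triangle_succ (m + d)
    have e : m + (d + 1) = (m + d) + 1 := by omega
    rw [e, h]
    omega

lemma cross_pow (a b : ℕ) (hab : b < a) {r s : ℝ} (hr : 0 < r) (hrs : r < s) :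
    r ^ a * s ^ b < s ^ a * r ^ b := by
  obtain ⟨c, rfl⟩ : ∃ c, a = b + (c + 1) := ⟨a - b - 1, by omega⟩
  have hs : 0 < s := hr.trans hrs
  have h1 : (0:ℝ) < r ^ b * s ^ b := by positivity
  have h2 : r ^ (c + 1) < s ^ (c + 1) :=
    pow_lt_pow_left₀ hrs hr.le (by omega)
  calc r ^ (b + (c + 1)) * s ^ b = (r ^ b * s ^ b) * r ^ (c + 1) := by
        rw [pow_add]; ring
    _ < (r ^ b * s ^ b) * s ^ (c + 1) := by
        exact mul_lt_mul_of_pos_left h2 h1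
    _ = s ^ (b + (c + 1)) * r ^ b := by rw [pow_add]; ring

lemma cross_sum (k N : ℕ) (A B : ℕ → ℕ) (hk : 0 < k) (hN : 0 < N)
    (h : ∀ j < k, ∀ i < N, B i < A j) {r s : ℝ} (hr : 0 < r) (hrs : r < s) :
    (∑ j ∈ range k, r ^ A j) * (∑ i ∈ range N, s ^ B i) <
      (∑ j ∈ range k, s ^ A j) * (∑ i ∈ range N, r ^ B i) := by
  rw [Finset.sum_mul_sum, Finset.sum_mul_sum]
  refine Finset.sum_lt_sum_of_nonempty (Finset.nonempty_range_iff.mpr (by omega)) ?_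
  intro j hj
  refine Finset.sum_lt_sum_of_nonempty (Finset.nonempty_range_iff.mpr (by omega)) ?_
  intro i hi
  exact cross_pow _ _ (h j (mem_range.mp hj) i (mem_range.mp hi)) hr hrs

/-- For n ≥ 6 and 1 ≤ k ≤ ⌊n/2⌋ - 1, P^{n,k} has exactly one root in (0,∞),
and this root lies in (1,2). -/
theorem stmt_15 (n k : ℕ) (hn : 6 ≤ n) (hk : 1 ≤ k) (hkn : k ≤ n / 2 - 1) :
    (∃! r : ℝ, 0 < r ∧ Pexp n k r = 0) ∧
    (∀ r : ℝ, 0 < r → Pexp n k r = 0 → r ∈ Set.Ioo (1 : ℝ) 2) := by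
  have hn2k : 2 * k + 2 ≤ n := by omega
  set m : ℕ := n - k + 1 with hm
  have hm5 : 5 ≤ m := by omega
  set C : ℕ := (n - k + 1) * (n - k) / 2 with hC
  set N : ℕ := n - k + 1 - 2 with hN
  have hNm : N = m - 2 := by omega
  have hkN : k < N := by omega
  set A : ℕ → ℕ := fun j => (n - j) * (n - j - 1) / 2 - (k - j) with hA
  set B : ℕ → ℕ := fun i => C - (n - k + 1) - i with hB
  -- C is at least 2*m
  have hC2m : 2 * m ≤ C := by
    have h1 : m * 4 ≤ m * (m - 1) := Nat.mul_le_mul_left m (by omega)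
    have h2 : m * 4 / 2 ≤ m * (m - 1) / 2 := Nat.div_le_div_right h1
    have h3 : C = m * (m - 1) / 2 := by
      rw [hC, hm]; congr 1
    omega
  -- key exponent inequality
  have hkey : ∀ j < k, C + (k - j) ≤ (n - j) * (n - j - 1) / 2 + 1 := by
    intro j hj
    have haux := aux_quad m (k - 1 - j) (by omega)
    have e1 : m + (k - 1 - j) = n - j := by omega
    rw [e1] at haux
    have h3 : C = m * (m - 1) / 2 := by rw [hC, hm]; congr 1
    omega
  have hAB : ∀ j < k, ∀ i, B i + 2 ≤ A j := by
    intro j hj i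
    have h1 := hkey j hj
    have h2 : B i ≤ C - m := Nat.sub_le _ _
    have h3 : C - 1 ≤ A j := by
      simp only [hA]
      omega
    omega
  have hB0i : ∀ i < N, B i + i = B 0 := by
    intro i hi
    simp only [hB]
    omega
  -- Pexp as difference of sums
  have hPexp : ∀ r : ℝ, Pexp n k r =
      (∑ j ∈ range k, r ^ A j) - ∑ i ∈ range N, r ^ B i := by
    intro r; rfl
  -- negativity on (0,1]
  have hneg : ∀ r : ℝ, 0 < r → r ≤ 1 → Pexp n k r < 0 := by
    intro r hr hr1
    rw [hPexp, sub_neg]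
    calc ∑ j ∈ range k, r ^ A j ≤ ∑ j ∈ range k, r ^ B j := by
          refine Finset.sum_le_sum ?_
          intro j hj
          exact pow_le_pow_of_le_one hr.le hr1 (by have := hAB j (mem_range.mp hj) j; omega)
      _ < ∑ i ∈ range N, r ^ B i := by
          refine Finset.sum_lt_sum_of_subset
            (Finset.range_subset_range.mpr hkN.le) (Finset.mem_range.mpr hkN)
            (by simp) (by positivity) ?_
          intro i _ _
          positivity
  -- positivity on [2,∞)
  have hpos : ∀ r : ℝ, 2 ≤ r → 0 < Pexp n k r := by
    intro r hr2
    have hr0 : (0:ℝ) < r := by linarith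
    have hr1 : (1:ℝ) < r := by linarith
    rw [hPexp, sub_pos]
    have hgb : ∑ i ∈ range N, r ^ B i ≤ r ^ B 0 * 2 := by
      calc ∑ i ∈ range N, r ^ B i ≤ ∑ i ∈ range N, r ^ B 0 * (1/2) ^ i := by
            refine Finset.sum_le_sum ?_
            intro i hi
            have hei : B i + i = B 0 := hB0i i (mem_range.mp hi)
            have h2i : (2:ℝ) ^ i ≤ r ^ i := pow_le_pow_left₀ (by norm_num) hr2 i
            have hpow : r ^ B i * r ^ i = r ^ B 0 := by rw [← pow_add, hei]
            have h2pos : (0:ℝ) < 2 ^ i := by positivity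
            have heq : r ^ B 0 * (1/2:ℝ) ^ i = r ^ B 0 / 2 ^ i := by
              rw [div_pow]; ring
            rw [heq, le_div_iff₀ h2pos]
            calc r ^ B i * 2 ^ i ≤ r ^ B i * r ^ i := by
                  exact mul_le_mul_of_nonneg_left h2i (by positivity)
              _ = r ^ B 0 := hpow
        _ = r ^ B 0 * ∑ i ∈ range N, (1/2:ℝ) ^ i := by rw [Finset.mul_sum]
        _ ≤ r ^ B 0 * 2 := by
            exact mul_le_mul_of_nonneg_left (sum_geometric_two_le N) (by positivity)
    have hA0 : B 0 + 2 ≤ A 0 := hAB 0 hk 0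
    calc ∑ i ∈ range N, r ^ B i ≤ r ^ B 0 * 2 := hgb
      _ ≤ r ^ B 0 * r := by
          exact mul_le_mul_of_nonneg_left hr2 (by positivity)
      _ = r ^ (B 0 + 1) := by rw [pow_succ]
      _ < r ^ A 0 := pow_lt_pow_right₀ hr1 (by omega)
      _ ≤ ∑ j ∈ range k, r ^ A j := by
          exact Finset.single_le_sum (f := fun j => r ^ A j)
            (fun i _ => by positivity) (Finset.mem_range.mpr hk)
  -- uniqueness of positive roots
  have huniq : ∀ r s : ℝ, 0 < r → 0 < s → Pexp n k r = 0 → Pexp n k s = 0 → r = s := by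
    have key : ∀ r s : ℝ, 0 < r → r < s → Pexp n k r = 0 → Pexp n k s = 0 → False := by
      intro r s hr hrs hPr hPs
      rw [hPexp, sub_eq_zero] at hPr hPs
      have hcross := cross_sum k N A B hk (by omega)
        (fun j hj i _ => by have := hAB j hj i; omega) hr hrs
      rw [hPr, hPs] at hcross
      rw [mul_comm] at hcross
      exact lt_irrefl _ hcross
    intro r s hr hs hPr hPs
    rcases lt_trichotomy r s with h | h | h
    · exact absurd (key r s hr h hPr hPs) (by simp)
    · exact h
    · exact absurd (key s r hs h hPs hPr) (by simp)
  -- existence via IVT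
  have hcont : ContinuousOn (Pexp n k) (Set.Icc 1 2) := by
    apply Continuous.continuousOn
    unfold Pexp
    apply Continuous.sub <;> exact continuous_finset_sum _ (fun i _ => continuous_pow _)
  have hivt : ∃ r ∈ Set.Ioo (1:ℝ) 2, Pexp n k r = 0 := by
    have h1 : Pexp n k 1 < 0 := hneg 1 one_pos le_rfl
    have h2 : 0 < Pexp n k 2 := hpos 2 le_rfl
    have := intermediate_value_Ioo (by norm_num : (1:ℝ) ≤ 2) hcont
      (Set.mem_Ioo.mpr ⟨h1, h2⟩)
    obtain ⟨r, hr, hr0⟩ := this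
    exact ⟨r, hr, hr0⟩
  obtain ⟨r, hrmem, hr0⟩ := hivt
  obtain ⟨hr1, hr2⟩ := hrmem
  constructor
  · refine ⟨r, ⟨by linarith, hr0⟩, ?_⟩
    intro s ⟨hs, hPs⟩
    exact huniq s r hs (by linarith) hPs hr0
  · intro s hs hPs
    constructor
    · by_contra h
      push_neg at h
      exact absurd hPs (ne_of_lt (hneg s hs h))
    · by_contra h
      push_neg at h
      exact absurd hPs (ne_of_gt (hpos s h))
end

section
/- For m ≥ 5 and r > 1, r·P^{m,2}(r) - P^{m,1}(r) > 0. Explicitly, with M = C(m,2), r·P^{m,2}(r) - P^{m,1}(r) = (r^{M-m+1} + ... + r^{M-2m+3}) - (r^{M-2m+3} + ... + r^{M-3m+7}) > 0. -/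
open Finset

lemma sum_Icc_eq_range (a m : ℕ) (f : ℕ → ℝ) :
    ∑ j ∈ Finset.Icc a m, f j = ∑ i ∈ Finset.range (m + 1 - a), f (m - i) := by
  refine Finset.sum_nbij' (fun j => m - j) (fun i => m - i) ?_ ?_ ?_ ?_ ?_ <;>
      intro x hx <;>
      simp only [mem_Icc, mem_range] at hx <;>
      beta_reduce <;>
      first
        | (simp only [mem_Icc, mem_range]; omega)
        | omega
        | (congr 1; omega)

lemma cutW_Icc (n k : ℕ) (hk : k ≤ n) (r : ℝ) :
    cutW n (Finset.Icc 1 k) r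
      = ∑ i ∈ Finset.Icc 1 k, ∑ j ∈ Finset.Icc (k+1) n, r ^ (n*(n-1)/2 - idx n i j) := by
  unfold cutW
  rw [← Finset.sum_subset (Finset.Icc_subset_Icc_right hk) ?_]
  · refine Finset.sum_congr rfl fun i hi => ?_
    simp only [mem_Icc] at hi
    have hiS : i ∈ Finset.Icc 1 k := by simp only [mem_Icc]; omega
    calc ∑ j ∈ Finset.Icc (i+1) n,
          (if (i ∈ Finset.Icc 1 k) ↔ (j ∈ Finset.Icc 1 k) then (0:ℝ)
            else r ^ (n*(n-1)/2 - idx n i j))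
        = ∑ j ∈ Finset.Icc (i+1) n,
            (if j ∉ Finset.Icc 1 k then r ^ (n*(n-1)/2 - idx n i j) else 0) := by
          refine Finset.sum_congr rfl fun j hj => ?_
          by_cases h : j ∈ Finset.Icc 1 k <;> simp [h, hiS]
      _ = ∑ j ∈ (Finset.Icc (i+1) n).filter (fun j => j ∉ Finset.Icc 1 k),
            r ^ (n*(n-1)/2 - idx n i j) := (Finset.sum_filter _ _).symm
      _ = ∑ j ∈ Finset.Icc (k+1) n, r ^ (n*(n-1)/2 - idx n i j) := by
          congr 1
          ext j
          simp only [mem_filter, mem_Icc]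
          omega
  · intro i hi hni
    refine Finset.sum_eq_zero fun j hj => ?_
    have h2 : j ∉ Finset.Icc 1 k := by
      simp only [mem_Icc] at *; omega
    rw [if_pos (iff_of_false hni h2)]

/-- For m ≥ 5 and r > 1, with M = C(m,2):
r·P^{m,2}(r) - P^{m,1}(r) = Σ_{i=0}^{m-2} r^{M-2m+3+i} - Σ_{i=0}^{m-4} r^{M-3m+7+i} > 0. -/
theorem stmt_16 (m : ℕ) (hm : 5 ≤ m) (r : ℝ) (hr : 1 < r) :
    r * P m 2 r - P m 1 r
        = (∑ i ∈ Finset.range (m - 1), r ^ (m * (m - 1) / 2 - (2 * m - 3) + i))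
          - ∑ i ∈ Finset.range (m - 3), r ^ (m * (m - 1) / 2 - (3 * m - 7) + i) ∧
    0 < r * P m 2 r - P m 1 r := by
  have hdvd : 2 ∣ m * (m - 1) := by
    have h := Nat.even_mul_succ_self (m - 1)
    have h5 : m - 1 + 1 = m := by omega
    rw [h5, Nat.mul_comm] at h
    exact h.two_dvd
  have hM2 : m * (m - 1) / 2 * 2 = m * (m - 1) := Nat.div_mul_cancel hdvd
  have hq : 6 * m ≤ m * (m - 1) + 12 := by
    obtain ⟨p, rfl⟩ : ∃ p, m = p + 5 := ⟨m - 5, by omega⟩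
    have h1 : p + 5 - 1 = p + 4 := by omega
    rw [h1]
    nlinarith [sq_nonneg p]
  have hMlow : 3 * m ≤ m * (m - 1) / 2 + 6 := by
    obtain ⟨q, hq1⟩ : ∃ q, m * (m - 1) = q := ⟨_, rfl⟩
    rw [hq1] at hM2 hq
    omega
  -- compute cutW values
  have e1 : cutW m (Finset.Icc 1 1) r
      = ∑ j ∈ Finset.Icc 2 m, r ^ (m*(m-1)/2 - idx m 1 j) := by
    rw [cutW_Icc m 1 (by omega)]
    rw [Finset.Icc_self, Finset.sum_singleton]
  have e2 : cutW m (Finset.Icc 1 2) r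
      = (∑ j ∈ Finset.Icc 3 m, r ^ (m*(m-1)/2 - idx m 1 j))
        + ∑ j ∈ Finset.Icc 3 m, r ^ (m*(m-1)/2 - idx m 2 j) := by
    rw [cutW_Icc m 2 (by omega)]
    have h12 : Finset.Icc (1:ℕ) 2 = {1, 2} := rfl
    rw [h12, Finset.sum_insert (by decide), Finset.sum_singleton]
  have e3 : cutW m (Finset.Icc 1 3) r
      = ((∑ j ∈ Finset.Icc 4 m, r ^ (m*(m-1)/2 - idx m 1 j))
        + ∑ j ∈ Finset.Icc 4 m, r ^ (m*(m-1)/2 - idx m 2 j))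
        + ∑ j ∈ Finset.Icc 4 m, r ^ (m*(m-1)/2 - idx m 3 j) := by
    rw [cutW_Icc m 3 (by omega)]
    have h13 : Finset.Icc (1:ℕ) 3 = {1, 2, 3} := rfl
    rw [h13, Finset.sum_insert (by decide), Finset.sum_insert (by decide),
      Finset.sum_singleton]
    ring
  have hsplit2 : Finset.Icc 2 m = insert 2 (Finset.Icc 3 m) := by
    ext x; simp only [mem_insert, mem_Icc]; omega
  have hsplit3 : Finset.Icc 3 m = insert 3 (Finset.Icc 4 m) := by
    ext x; simp only [mem_insert, mem_Icc]; omega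
  have hidx12 : idx m 1 2 = 1 := by simp only [idx]; omega
  have hidx13 : idx m 1 3 = 2 := by simp only [idx]; omega
  have hidx23 : idx m 2 3 = m := by simp only [idx]; omega
  have hP1 : P m 1 r = r ^ (m*(m-1)/2 - 1)
      - ∑ j ∈ Finset.Icc 3 m, r ^ (m*(m-1)/2 - idx m 2 j) := by
    have h : P m 1 r = cutW m (Finset.Icc 1 1) r - cutW m (Finset.Icc 1 2) r := by
      norm_num [P]
    rw [h, e1, e2, hsplit2, Finset.sum_insert (by simp), hidx12]
    ring
  have hP2 : P m 2 r = r ^ (m*(m-1)/2 - 2) + r ^ (m*(m-1)/2 - m)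
      - ∑ j ∈ Finset.Icc 4 m, r ^ (m*(m-1)/2 - idx m 3 j) := by
    have h : P m 2 r = cutW m (Finset.Icc 1 2) r - cutW m (Finset.Icc 1 3) r := by
      norm_num [P]
    rw [h, e2, e3, hsplit3, Finset.sum_insert (by simp), Finset.sum_insert (by simp),
      hidx13, hidx23]
    ring
  -- reindex
  have hR2 : ∑ j ∈ Finset.Icc 3 m, r ^ (m*(m-1)/2 - idx m 2 j)
      = ∑ i ∈ Finset.range (m-2), r ^ (m*(m-1)/2 - (2*m-3) + i) := by
    rw [sum_Icc_eq_range 3 m, show m + 1 - 3 = m - 2 from by omega]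
    refine Finset.sum_congr rfl fun i hi => ?_
    simp only [mem_range] at hi
    congr 1
    simp only [idx]
    have h := hMlow
    generalize m * (m - 1) / 2 = M at h ⊢
    omega
  have hR3 : ∑ j ∈ Finset.Icc 4 m, r ^ (m*(m-1)/2 - idx m 3 j)
      = ∑ i ∈ Finset.range (m-3), r ^ (m*(m-1)/2 - (3*m-6) + i) := by
    rw [sum_Icc_eq_range 4 m, show m + 1 - 4 = m - 3 from by omega]
    refine Finset.sum_congr rfl fun i hi => ?_
    simp only [mem_range] at hi
    congr 1
    simp only [idx]
    have h := hMlow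
    generalize m * (m - 1) / 2 = M at h ⊢
    omega
  have hA : r * r ^ (m*(m-1)/2 - 2) = r ^ (m*(m-1)/2 - 1) := by
    rw [← pow_succ']
    congr 1
    have h := hMlow
    generalize m * (m - 1) / 2 = M at h ⊢
    omega
  have hAtop : r * r ^ (m*(m-1)/2 - m) = r ^ (m*(m-1)/2 - (2*m-3) + (m-2)) := by
    rw [← pow_succ']
    congr 1
    have h := hMlow
    generalize m * (m - 1) / 2 = M at h ⊢
    omega
  have hC : r * ∑ i ∈ Finset.range (m-3), r ^ (m*(m-1)/2 - (3*m-6) + i)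
      = ∑ i ∈ Finset.range (m-3), r ^ (m*(m-1)/2 - (3*m-7) + i) := by
    rw [Finset.mul_sum]
    refine Finset.sum_congr rfl fun i hi => ?_
    rw [← pow_succ']
    congr 1
    have h := hMlow
    generalize m * (m - 1) / 2 = M at h ⊢
    omega
  have key : r * P m 2 r - P m 1 r
      = (∑ i ∈ Finset.range (m - 1), r ^ (m * (m - 1) / 2 - (2 * m - 3) + i))
        - ∑ i ∈ Finset.range (m - 3), r ^ (m * (m - 1) / 2 - (3 * m - 7) + i) := by
    rw [hP1, hP2, hR2, hR3,
      show Finset.range (m - 1) = Finset.range ((m - 2) + 1) from by congr 1; omega,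
      Finset.sum_range_succ]
    linear_combination hA + hAtop - hC
  refine ⟨key, ?_⟩
  rw [key]
  have hr0 : (0:ℝ) < r := lt_trans zero_lt_one hr
  set c : ℝ := r ^ (m*(m-1)/2 - (2*m-3)) with hc
  have hB : ∑ i ∈ Finset.range (m-3), r ^ (m * (m - 1) / 2 - (3 * m - 7) + i)
      ≤ (m-3) • c := by
    have := Finset.sum_le_card_nsmul (Finset.range (m-3))
      (fun i => r ^ (m * (m - 1) / 2 - (3 * m - 7) + i)) c ?_
    · simpa using this
    · intro i hi
      simp only [mem_range] at hi
      apply pow_le_pow_right₀ hr.le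
      have h := hMlow
      generalize m * (m - 1) / 2 = M at h ⊢
      omega
  have hA' : ((m-3) + 2) • c ≤ ∑ i ∈ Finset.range (m-1),
      r ^ (m * (m - 1) / 2 - (2 * m - 3) + i) := by
    have := Finset.card_nsmul_le_sum (Finset.range (m-1))
      (fun i => r ^ (m * (m - 1) / 2 - (2 * m - 3) + i)) c ?_
    · rw [Finset.card_range] at this
      rw [show (m-3) + 2 = m - 1 from by omega]
      exact this
    · intro i hi
      exact pow_le_pow_right₀ hr.le (Nat.le_add_right _ _)
  rw [add_nsmul, two_nsmul] at hA'
  have hcpos : 0 < c := pow_pos hr0 _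
  linarith
end

section
/- For n ≥ 6, the thresholds are strictly decreasing in k: r_{k+1}(n) < r_k(n) for 1 ≤ k ≤ ⌊n/2⌋ - 2; moreover for each fixed k ≥ 1, r_k(n) → 1 as n → ∞. -/
open Finset

open Filter

/-!
With `a = n - k - 1`, the only edges that `C_k` and `C_{k+1}` cut differently are `(i, k+1)`,
`i ≤ k`, and `(k+1, j)`, `j ≥ k+2`; since `N - idx n i j = C(n-i, 2) + (n-j)`,
`P^{n,k}(r) = ∑_{i ≤ k} r^(C(n-i,2) + a) - ∑_{m < a} r^(C(a,2) + m)`.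
All positive exponents are `≥ C(a+1,2)` and all negative ones are smaller, so dividing by
`r^C(a+1,2)` shows that once `P^{n,k}` is nonnegative it stays positive: `P^{n,k}(x) > 0` puts
the root below `x`. At the root `x ≥ 1` of `P^{n,k}`, the root equation turns `x · P^{n,k+1}(x)`
into the negative sum of `P^{n,k}` minus termwise smaller powers plus a positive term, so
`r_{k+1} < r_k`. For the limit, the single term `r^(C(n-1,2) + a)` beats the geometric negative
sum once `(r - 1) r^(n-2) ≥ 1`, which holds for all large `n` at every fixed `r > 1`.
-/

theorem sum_pow_lt_sum_pow_of_separated {ι κ : Type*} {s : Finset ι} {t : Finset κ}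
    {a : ι → ℕ} {b : κ → ℕ} {c : ℕ} (ha : ∀ i ∈ s, c ≤ a i) (hb : ∀ j ∈ t, b j < c)
    (ht : t.Nonempty) {x y : ℝ} (hx : 0 < x) (hxy : x < y)
    (h : ∑ j ∈ t, x ^ b j ≤ ∑ i ∈ s, x ^ a i) :
    ∑ j ∈ t, y ^ b j < ∑ i ∈ s, y ^ a i := by
  have hy : 0 < y := hx.trans hxy
  have hlow : x ^ c * ∑ j ∈ t, y ^ b j < y ^ c * ∑ j ∈ t, x ^ b j := by
    simp only [mul_sum]
    refine sum_lt_sum_of_nonempty ht fun j hj => ?_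
    obtain ⟨d, hd⟩ := Nat.exists_eq_add_of_lt (hb j hj)
    rw [hd]
    calc x ^ (b j + d + 1) * y ^ b j = (x ^ b j * y ^ b j) * x ^ (d + 1) := by ring
      _ < (x ^ b j * y ^ b j) * y ^ (d + 1) := by gcongr
      _ = y ^ (b j + d + 1) * x ^ b j := by ring
  have hhigh : y ^ c * ∑ i ∈ s, x ^ a i ≤ x ^ c * ∑ i ∈ s, y ^ a i := by
    simp only [mul_sum]
    refine sum_le_sum fun i hi => ?_
    obtain ⟨d, hd⟩ := Nat.exists_eq_add_of_le (ha i hi)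
    rw [hd]
    calc y ^ c * x ^ (c + d) = (x ^ c * y ^ c) * x ^ d := by ring
      _ ≤ (x ^ c * y ^ c) * y ^ d := by gcongr
      _ = x ^ c * y ^ (c + d) := by ring
  have := hlow.trans_le ((mul_le_mul_of_nonneg_left h (by positivity)).trans hhigh)
  exact lt_of_mul_lt_mul_left this (by positivity)

lemma choose_two_succ (m : ℕ) : (m + 1).choose 2 = m.choose 2 + m := by
  rw [Nat.choose_two_right, Nat.choose_two_right, Nat.triangle_succ]

lemma triangle_sub_idx {n i j : ℕ} (hi : 1 ≤ i) (hij : i < j) (hjn : j ≤ n) :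
    n * (n - 1) / 2 - idx n i j = (n - i).choose 2 + (n - j) := by
  obtain ⟨s, rfl⟩ : ∃ s, i = s + 1 := ⟨i - 1, by omega⟩
  obtain ⟨p, rfl⟩ : ∃ p, n = s + 1 + p := ⟨n - (s + 1), by omega⟩
  rw [← Nat.choose_two_right, idx, ← Nat.choose_two_right, Nat.add_sub_cancel,
    Nat.add_sub_cancel_left]
  have hn : (s + 1 + p).choose 2 = (s + 1).choose 2 + p.choose 2 + s * p + p := by
    rify; push_cast [Nat.cast_choose_two]; ring
  have hs : s * (s + 1 + p) = 2 * (s + 1).choose 2 + s * p := by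
    rify; push_cast [Nat.cast_choose_two]; ring
  omega

lemma sum_cut_Icc_sub_sum_cut_Icc_succ {M : Type*} [AddCommGroup M] (w : ℕ → ℕ → M)
    {n k : ℕ} (hkn : k < n) :
    (∑ i ∈ Icc 1 n, ∑ j ∈ Icc (i + 1) n, if (i ∈ Icc 1 k ↔ j ∈ Icc 1 k) then 0 else w i j) -
      (∑ i ∈ Icc 1 n, ∑ j ∈ Icc (i + 1) n,
        if (i ∈ Icc 1 (k + 1) ↔ j ∈ Icc 1 (k + 1)) then 0 else w i j) =
      ∑ i ∈ Icc 1 k, w i (k + 1) - ∑ j ∈ Icc (k + 2) n, w (k + 1) j := by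
  have htermwise : ∀ i ∈ Icc 1 n, ∀ j ∈ Icc (i + 1) n,
      ((if (i ∈ Icc 1 k ↔ j ∈ Icc 1 k) then 0 else w i j) -
        if (i ∈ Icc 1 (k + 1) ↔ j ∈ Icc 1 (k + 1)) then 0 else w i j) =
      (if j = k + 1 then w i j else 0) - if i = k + 1 then w i j else 0 := by
    intro i hi j hj
    simp only [mem_Icc] at hi hj ⊢
    split_ifs <;> first | abel1 | (exfalso; omega)
  simp only [← sum_sub_distrib]
  rw [sum_congr rfl fun i hi => sum_congr rfl (htermwise i hi)]
  simp only [sum_sub_distrib, sum_ite_eq', ← sum_filter]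
  congr 1
  · congr 1
    ext i
    simp only [mem_filter, mem_Icc]
    omega
  · rw [sum_eq_single_of_mem (k + 1) (by simp only [mem_Icc]; omega) fun i _ hi => by simp [hi]]
    simp

lemma P_eq_sum {n k : ℕ} (hkn : k < n) (r : ℝ) :
    P n k r = ∑ i ∈ Icc 1 k, r ^ ((n - i).choose 2 + (n - k - 1)) -
      ∑ m ∈ range (n - k - 1), r ^ ((n - k - 1).choose 2 + m) := by
  rw [P, cutW, cutW,
    sum_cut_Icc_sub_sum_cut_Icc_succ (fun i j => r ^ (n * (n - 1) / 2 - idx n i j)) hkn]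
  congr 1
  · refine sum_congr rfl fun i hi => ?_
    rw [mem_Icc] at hi
    rw [triangle_sub_idx (by omega) (by omega) (by omega)]
    congr 2
  · refine sum_nbij' (fun j => n - j) (fun m => n - m) ?_ ?_ ?_ ?_ ?_ <;>
      intro j hj <;> simp only [mem_Icc, mem_range] at hj ⊢
    · omega
    · omega
    · omega
    · omega
    · rw [triangle_sub_idx (by omega) (by omega) (by omega)]
      congr 2

lemma P_pos_of_nonneg_of_lt {n k : ℕ} (hkn : k + 2 ≤ n) {x y : ℝ} (hx : 0 < x) (hxy : x < y)
    (h : 0 ≤ P n k x) : 0 < P n k y := by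
  rw [P_eq_sum (by omega), sub_nonneg] at h
  rw [P_eq_sum (by omega), sub_pos]
  refine sum_pow_lt_sum_pow_of_separated (c := (n - k - 1).choose 2 + (n - k - 1)) ?_ ?_
    (nonempty_range_iff.2 (by omega)) hx hxy h
  · intro i hi
    rw [mem_Icc] at hi
    exact Nat.add_le_add_right (Nat.choose_le_choose 2 (by omega)) _
  · intro m hm
    rw [mem_range] at hm
    omega

lemma lt_of_P_pos_of_P_eq_zero {n k : ℕ} (hkn : k + 2 ≤ n) {x y : ℝ} (hx : 0 < x)
    (hPx : 0 < P n k x) (hPy : P n k y = 0) : y < x := by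
  by_contra! hxy
  obtain rfl | hxy := hxy.eq_or_lt
  · exact hPx.ne' hPy
  · exact (P_pos_of_nonneg_of_lt hkn hx hxy hPx.le).ne' hPy

lemma P_succ_pos_of_P_eq_zero {n k : ℕ} (hkn : k + 2 ≤ n) {x : ℝ} (hx : 1 ≤ x)
    (hroot : P n k x = 0) : 0 < P n (k + 1) x := by
  obtain ⟨a, ha⟩ : ∃ a, n - k - 1 = a + 1 := ⟨n - k - 2, by omega⟩
  have ha' : n - (k + 1) - 1 = a := by omega
  rw [P_eq_sum (by omega), ha, sub_eq_zero] at hroot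
  rw [P_eq_sum (by omega), ha', sum_Icc_succ_top (by omega), show n - (k + 1) = a + 1 by omega]
  have hshift : ∑ m ∈ range a, x ^ (a.choose 2 + m + 1) ≤
      ∑ m ∈ range (a + 1), x ^ ((a + 1).choose 2 + m) :=
    calc ∑ m ∈ range a, x ^ (a.choose 2 + m + 1)
        ≤ ∑ m ∈ range a, x ^ ((a + 1).choose 2 + m) := by
          refine sum_le_sum fun m hm => pow_le_pow_right₀ hx ?_
          rw [mem_range] at hm
          rw [choose_two_succ]
          omega
      _ ≤ ∑ m ∈ range (a + 1), x ^ ((a + 1).choose 2 + m) := by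
          rw [sum_range_succ]
          exact le_add_of_nonneg_right (by positivity)
  have hx0 : 0 < x := by linarith
  refine pos_of_mul_pos_right ?_ hx0.le
  have hmul : x * (∑ i ∈ Icc 1 k, x ^ ((n - i).choose 2 + a) + x ^ ((a + 1).choose 2 + a) -
      ∑ m ∈ range a, x ^ (a.choose 2 + m)) = ∑ i ∈ Icc 1 k, x ^ ((n - i).choose 2 + (a + 1)) +
      x ^ ((a + 1).choose 2 + a + 1) - ∑ m ∈ range a, x ^ (a.choose 2 + m + 1) := by
    simp only [mul_sub, mul_add, mul_sum, ← pow_succ', add_assoc]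
  rw [hmul, hroot]
  have := pow_pos hx0 ((a + 1).choose 2 + a + 1)
  linarith

lemma P_pos_of_one_le_mul_pow {n k : ℕ} (hk : 1 ≤ k) (hkn : k < n) {r : ℝ} (hr : 1 < r)
    (hfar : 1 ≤ (r - 1) * r ^ (n - 2)) : 0 < P n k r := by
  have hr1 : 0 < r - 1 := by linarith
  rw [P_eq_sum hkn, sub_pos]
  set a := n - k - 1
  have hexp : a.choose 2 + a + (n - 2) ≤ (n - 1).choose 2 + a := by
    have hn : (n - 1).choose 2 = (n - 2).choose 2 + (n - 2) := by
      rw [show n - 1 = n - 2 + 1 by omega, choose_two_succ]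
    have := Nat.choose_le_choose 2 (show a ≤ n - 2 by omega)
    omega
  refine lt_of_mul_lt_mul_left ?_ hr1.le
  calc (r - 1) * ∑ m ∈ range a, r ^ (a.choose 2 + m) = r ^ a.choose 2 * (r ^ a - 1) := by
        rw [← geom_sum_mul]
        simp only [pow_add, ← mul_sum]
        ring
    _ < r ^ a.choose 2 * r ^ a := by gcongr; linarith
    _ ≤ (r - 1) * r ^ (n - 2) * (r ^ a.choose 2 * r ^ a) :=
        le_mul_of_one_le_left (by positivity) hfar
    _ = (r - 1) * r ^ (a.choose 2 + a + (n - 2)) := by ring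
    _ ≤ (r - 1) * r ^ ((n - 1).choose 2 + a) := by gcongr; exact hr.le
    _ ≤ (r - 1) * ∑ i ∈ Icc 1 k, r ^ ((n - i).choose 2 + a) := by
        gcongr
        exact single_le_sum (f := fun i => r ^ ((n - i).choose 2 + a)) (fun i _ => by positivity)
          (mem_Icc.2 ⟨le_rfl, hk⟩)

/-- For n ≥ 6, the thresholds r_k(n) (the unique roots in (1,2) of P^{n,k})
are strictly decreasing in k for 1 ≤ k ≤ ⌊n/2⌋ - 2; moreover, for each
fixed k ≥ 1, r_k(n) → 1 as n → ∞. -/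
theorem stmt_18 (ρ : ℕ → ℕ → ℝ)
    (hρ : ∀ n k : ℕ, 6 ≤ n → 1 ≤ k → k ≤ n / 2 - 1 →
      ρ k n ∈ Set.Ioo (1 : ℝ) 2 ∧ P n k (ρ k n) = 0) :
    (∀ n k : ℕ, 6 ≤ n → 1 ≤ k → k ≤ n / 2 - 2 → ρ (k + 1) n < ρ k n) ∧
    (∀ k : ℕ, 1 ≤ k → Tendsto (fun n => ρ k n) atTop (nhds 1)) := by
  refine ⟨fun n k hn hk hkn => ?_, fun k hk => ?_⟩
  · obtain ⟨⟨hx, -⟩, hroot⟩ := hρ n k hn hk (by omega)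
    exact lt_of_P_pos_of_P_eq_zero (by omega) (by linarith)
      (P_succ_pos_of_P_eq_zero (by omega) hx.le hroot) (hρ n (k + 1) hn (by omega) (by omega)).2
  have hρk : ∀ᶠ n in atTop, k + 2 ≤ n ∧ 1 < ρ k n ∧ P n k (ρ k n) = 0 := by
    filter_upwards [eventually_ge_atTop (2 * k + 6)] with n hn
    obtain ⟨⟨hx, -⟩, hroot⟩ := hρ n k (by omega) hk (by omega)
    exact ⟨by omega, hx, hroot⟩
  refine tendsto_order.2 ⟨fun b hb => ?_, fun b hb => ?_⟩
  · filter_upwards [hρk] with n hn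
    exact hb.trans hn.2.1
  · have hgrow : ∀ᶠ n in atTop, 1 ≤ (b - 1) * b ^ (n - 2) :=
      (((tendsto_pow_atTop_atTop_of_one_lt hb).comp (tendsto_sub_atTop_nat 2)).const_mul_atTop
        (sub_pos.2 hb)).eventually_ge_atTop 1
    filter_upwards [hρk, hgrow] with n hn hfar
    exact lt_of_P_pos_of_P_eq_zero hn.1 (by linarith)
      (P_pos_of_one_le_mul_pow hk (by omega) hb hfar) hn.2.2
end
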